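/- Let π be a probability density on (0,∞) with ∫₀^∞ e^{κx}π(x)dx < ∞ for κ > 1, and let g: [0,1] → ℝ be bounded with support contained in an interval of length b ≤ 1. Define H_g(−a) := ∫_{−a}^∞ g(e^{−x−a}) π(x) dx for a < 0. Then, with β(y) := y^{−1}π(−log y) assumed bounded by B, one has |H_g(−a)| ≤ ‖g‖_∞^{} · B^{1/2} · b^{1/2} · e^{a(1+κ)/2} · (∫₀^∞ e^{κx}π(x)dx)^{1/2} for all a < 0. -/

import Mathlib

/-!
Cauchy–Schwarz with respect to the weight `π` splits `|H_g(-a)|` into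
`√(∫ g(e^{-x-a})² π)` and `√(∫_{-a}^∞ π)`. The bound on `β` says exactly
`π x ≤ B e^{-x}` for `x > 0`, so after the substitution `y = e^{-x-a}` the first integral
is at most `‖g‖²_∞ B e^a` times the length `b` of the support of `g`; the second is at most
`e^{κa} ∫ e^{κx} π` by Chernoff's bound.
-/

open MeasureTheory Set
open Real (exp log)

section CauchySchwarz

variable {α : Type*} [MeasurableSpace α] {μ : Measure α}

theorem integral_mul_le_sqrt_integral_sq_mul_sqrt_integral_sq {f h : α → ℝ}
    (hf₀ : 0 ≤ᵐ[μ] f) (hh₀ : 0 ≤ᵐ[μ] h) (hf : MemLp f 2 μ) (hh : MemLp h 2 μ) :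
    ∫ x, f x * h x ∂μ ≤ √(∫ x, f x ^ 2 ∂μ) * √(∫ x, h x ^ 2 ∂μ) := by
  have := integral_mul_le_Lp_mul_Lq_of_nonneg Real.HolderConjugate.two_two hf₀ hh₀
    (by rwa [ENNReal.ofReal_ofNat]) (by rwa [ENNReal.ofReal_ofNat])
  simpa only [Real.rpow_two, ← Real.sqrt_eq_rpow] using this

theorem abs_integral_mul_le_sqrt_integral_sq_mul_sqrt_integral {f w : α → ℝ}
    (hw₀ : ∀ x, 0 ≤ w x) (hw : Integrable w μ) (hf : AEStronglyMeasurable f μ)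
    (hfw : Integrable (fun x => f x ^ 2 * w x) μ) :
    |∫ x, f x * w x ∂μ| ≤ √(∫ x, f x ^ 2 * w x ∂μ) * √(∫ x, w x ∂μ) := by
  have hsqrt_w : AEStronglyMeasurable (fun x => √(w x)) μ :=
    Real.continuous_sqrt.comp_aestronglyMeasurable hw.aestronglyMeasurable
  have hsq_left : ∀ x, (|f x| * √(w x)) ^ 2 = f x ^ 2 * w x := fun x => by
    rw [mul_pow, sq_abs, Real.sq_sqrt (hw₀ x)]
  have hsq_right : ∀ x, √(w x) ^ 2 = w x := fun x => Real.sq_sqrt (hw₀ x)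
  have hleft : MemLp (fun x => |f x| * √(w x)) 2 μ :=
    (memLp_two_iff_integrable_sq (f := fun x => |f x| * √(w x)) (hf.norm.mul hsqrt_w)).2
      (by simpa only [hsq_left] using hfw)
  have hright : MemLp (fun x => √(w x)) 2 μ :=
    (memLp_two_iff_integrable_sq hsqrt_w).2 (by simpa only [hsq_right] using hw)
  calc |∫ x, f x * w x ∂μ| ≤ ∫ x, |f x * w x| ∂μ := abs_integral_le_integral_abs
    _ = ∫ x, |f x| * √(w x) * √(w x) ∂μ := by
        congr 1 with x
        rw [mul_assoc, Real.mul_self_sqrt (hw₀ x), abs_mul, abs_of_nonneg (hw₀ x)]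
    _ ≤ √(∫ x, f x ^ 2 * w x ∂μ) * √(∫ x, w x ∂μ) := by
        simpa only [hsq_left, hsq_right] using
          integral_mul_le_sqrt_integral_sq_mul_sqrt_integral_sq
            (.of_forall fun x => by positivity) (.of_forall fun x => by positivity) hleft hright

end CauchySchwarz

section ExponentialMoment

variable {π : ℝ → ℝ} {κ : ℝ}

theorem integrableOn_Ioi_of_integrableOn_exp_mul (hκ : 0 ≤ κ)
    (hπ : AEStronglyMeasurable π (volume.restrict (Ioi 0)))
    (hexp : IntegrableOn (fun x => exp (κ * x) * π x) (Ioi 0)) :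
    IntegrableOn π (Ioi 0) := by
  refine Integrable.mono hexp hπ
    ((ae_restrict_iff' measurableSet_Ioi).2 (.of_forall fun x hx => ?_))
  rw [norm_mul, Real.norm_of_nonneg (Real.exp_pos _).le]
  exact le_mul_of_one_le_left (norm_nonneg _) (Real.one_le_exp (by positivity [hx.out]))

theorem setIntegral_Ioi_le_exp_neg_mul_integral_exp_mul {t : ℝ} (hκ : 0 ≤ κ) (ht : 0 ≤ t)
    (hπ₀ : ∀ x, 0 ≤ π x) (hπ : IntegrableOn π (Ioi t))
    (hexp : IntegrableOn (fun x => exp (κ * x) * π x) (Ioi 0)) :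
    ∫ x in Ioi t, π x ≤ exp (-(κ * t)) * ∫ x in Ioi 0, exp (κ * x) * π x := by
  have hsub : Ioi t ⊆ Ioi 0 := Ioi_subset_Ioi ht
  calc ∫ x in Ioi t, π x
      ≤ ∫ x in Ioi t, exp (-(κ * t)) * (exp (κ * x) * π x) := by
        refine setIntegral_mono_on hπ ((hexp.mono_set hsub).const_mul _) measurableSet_Ioi
          fun x hx => ?_
        have : 1 ≤ exp (-(κ * t)) * exp (κ * x) := by
          rw [← Real.exp_add]
          exact Real.one_le_exp (by nlinarith [hx.out])
        nlinarith [hπ₀ x]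
    _ = exp (-(κ * t)) * ∫ x in Ioi t, exp (κ * x) * π x := integral_const_mul _ _
    _ ≤ exp (-(κ * t)) * ∫ x in Ioi 0, exp (κ * x) * π x := by
        refine mul_le_mul_of_nonneg_left ?_ (Real.exp_pos _).le
        exact setIntegral_mono_set hexp (.of_forall fun x => by have := hπ₀ x; positivity)
          hsub.eventuallyLE

end ExponentialMoment

theorem le_mul_exp_neg_of_inv_mul_comp_neg_log_le {π : ℝ → ℝ} {B : ℝ}
    (hβ : ∀ y ∈ Ioo (0:ℝ) 1, y⁻¹ * π (-log y) ≤ B) {x : ℝ} (hx : 0 < x) :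
    π x ≤ B * exp (-x) := by
  have h := hβ (exp (-x)) ⟨Real.exp_pos _, Real.exp_lt_one_iff.2 (by linarith)⟩
  rw [Real.log_exp, neg_neg, ← Real.exp_neg, neg_neg] at h
  calc π x = exp x * π x * exp (-x) := by
        rw [mul_comm (exp x), mul_assoc, ← Real.exp_add, add_neg_cancel, Real.exp_zero, mul_one]
    _ ≤ B * exp (-x) := by gcongr

section ExpChangeOfVariables

variable {E : Type*} [NormedAddCommGroup E] [NormedSpace ℝ E] (a : ℝ)

theorem image_exp_neg_sub_Ioi : (fun x => exp (-x - a)) '' Ioi (-a) = Ioo 0 1 := by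
  ext y
  constructor
  · rintro ⟨x, hx, rfl⟩
    exact ⟨Real.exp_pos _, Real.exp_lt_one_iff.2 (by linarith [hx.out])⟩
  · rintro ⟨hy₀, hy₁⟩
    refine ⟨-log y - a, ?_, ?_⟩
    · rw [mem_Ioi]
      linarith [Real.log_neg hy₀ hy₁]
    · dsimp only
      rw [show -(-log y - a) - a = log y by ring, Real.exp_log hy₀]

theorem hasDerivWithinAt_exp_neg_sub (s : Set ℝ) (x : ℝ) :
    HasDerivWithinAt (fun x => exp (-x - a)) (-exp (-x - a)) s x := by
  simpa using ((hasDerivAt_neg x).sub_const a).exp.hasDerivWithinAt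

theorem injective_exp_neg_sub : Function.Injective fun x => exp (-x - a) :=
  fun x y h => by linarith [Real.exp_injective h]

theorem integral_Ioi_exp_neg_sub_smul_comp (F : ℝ → E) :
    ∫ x in Ioi (-a), exp (-x - a) • F (exp (-x - a)) = ∫ y in Ioo 0 1, F y := by
  rw [← image_exp_neg_sub_Ioi a, integral_image_eq_integral_abs_deriv_smul measurableSet_Ioi
    (fun x _ => hasDerivWithinAt_exp_neg_sub a _ x) (injective_exp_neg_sub a).injOn]
  simp only [abs_neg, abs_of_pos (Real.exp_pos _)]

theorem integrableOn_Ioi_exp_neg_sub_smul_comp_iff (F : ℝ → E) :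
    IntegrableOn (fun x => exp (-x - a) • F (exp (-x - a))) (Ioi (-a)) ↔
      IntegrableOn F (Ioo 0 1) := by
  rw [← image_exp_neg_sub_Ioi a, integrableOn_image_iff_integrableOn_abs_deriv_smul
    measurableSet_Ioi (fun x _ => hasDerivWithinAt_exp_neg_sub a _ x)
    (injective_exp_neg_sub a).injOn]
  simp only [abs_neg, abs_of_pos (Real.exp_pos _)]

end ExpChangeOfVariables

theorem integral_Ioi_exp_neg_sub_mul_indicator_Icc_le (a c : ℝ) {b : ℝ} (hb : 0 ≤ b) :
    ∫ x in Ioi (-a), exp (-x - a) * (Icc c (c + b)).indicator 1 (exp (-x - a)) ≤ b := by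
  have h := integral_Ioi_exp_neg_sub_smul_comp a ((Icc c (c + b)).indicator (1 : ℝ → ℝ))
  simp only [smul_eq_mul] at h
  rw [h, integral_indicator_one measurableSet_Icc, measureReal_restrict_apply measurableSet_Icc]
  calc volume.real (Icc c (c + b) ∩ Ioo 0 1) ≤ volume.real (Icc c (c + b)) :=
        measureReal_mono inter_subset_left measure_Icc_lt_top.ne
    _ = b := by simp [Real.volume_real_Icc, hb]

theorem integral_Ioi_sq_comp_exp_neg_sub_mul_le {π g : ℝ → ℝ} {M B b c₀ a : ℝ}
    (hπ₀ : ∀ x, 0 ≤ π x) (hgM : ∀ y, |g y| ≤ M) (hb : 0 ≤ b)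
    (hsupp : ∀ y, y ∉ Icc c₀ (c₀ + b) → g y = 0) (hB : 0 ≤ B)
    (hβ : ∀ y ∈ Ioo (0:ℝ) 1, y⁻¹ * π (-log y) ≤ B) (ha : a ≤ 0) :
    ∫ x in Ioi (-a), g (exp (-x - a)) ^ 2 * π x ≤ M ^ 2 * B * exp a * b := by
  set w := fun x => exp (-x - a) * (Icc c₀ (c₀ + b)).indicator 1 (exp (-x - a))
  have hle : ∀ x ∈ Ioi (-a), g (exp (-x - a)) ^ 2 * π x ≤ M ^ 2 * B * exp a * w x := by
    intro x hx
    by_cases hy : exp (-x - a) ∈ Icc c₀ (c₀ + b)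
    · have hg : g (exp (-x - a)) ^ 2 ≤ M ^ 2 := sq_le_sq.2 ((hgM _).trans (le_abs_self M))
      have hπ : π x ≤ B * exp a * exp (-x - a) := by
        rw [mul_assoc, ← Real.exp_add, show a + (-x - a) = -x by ring]
        exact le_mul_exp_neg_of_inv_mul_comp_neg_log_le hβ (by linarith [hx.out])
      calc g (exp (-x - a)) ^ 2 * π x ≤ M ^ 2 * (B * exp a * exp (-x - a)) :=
            mul_le_mul hg hπ (hπ₀ x) (sq_nonneg M)
        _ = M ^ 2 * B * exp a * w x := by
            simp only [w, indicator_of_mem hy, Pi.one_apply, mul_one]; ring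
    · simp [w, hsupp _ hy, indicator_of_notMem hy]
  have hw : IntegrableOn w (Ioi (-a)) :=
    (integrableOn_Ioi_exp_neg_sub_smul_comp_iff a _).2
      ((integrableOn_const measure_Ioo_lt_top.ne).indicator measurableSet_Icc)
  calc ∫ x in Ioi (-a), g (exp (-x - a)) ^ 2 * π x
      ≤ ∫ x in Ioi (-a), M ^ 2 * B * exp a * w x :=
        integral_mono_of_nonneg (.of_forall fun x => by have := hπ₀ x; positivity)
          (hw.const_mul _) ((ae_restrict_iff' measurableSet_Ioi).2 (.of_forall hle))
    _ = M ^ 2 * B * exp a * ∫ x in Ioi (-a), w x := integral_const_mul _ _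
    _ ≤ M ^ 2 * B * exp a * b := mul_le_mul_of_nonneg_left
        (integral_Ioi_exp_neg_sub_mul_indicator_Icc_le a c₀ hb) (by positivity)

theorem stmt_16_general (π : ℝ → ℝ) (hmeas : Measurable π) (hpos : ∀ x, 0 ≤ π x)
    (κ : ℝ) (hκ : 1 < κ)
    (hexp : IntegrableOn (fun x => Real.exp (κ * x) * π x) (Ioi 0))
    (g : ℝ → ℝ) (hg : Measurable g)
    (M : ℝ) (hM : 0 ≤ M) (hgbdd : ∀ y, |g y| ≤ M)
    (b c₀ : ℝ) (hb0 : 0 ≤ b)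
    (hsupp : ∀ y, y ∉ Icc c₀ (c₀ + b) → g y = 0)
    (B : ℝ) (hB : 0 ≤ B)
    (hβ : ∀ y ∈ Ioo (0:ℝ) 1, y⁻¹ * π (-Real.log y) ≤ B) :
    ∀ a : ℝ, a < 0 →
      |∫ x in Ioi (-a), g (Real.exp (-x - a)) * π x| ≤
        M * Real.sqrt B * Real.sqrt b * Real.exp (a * (1 + κ) / 2) *
          Real.sqrt (∫ x in Ioi (0:ℝ), Real.exp (κ * x) * π x) := by
  intro a ha
  set I := ∫ x in Ioi (0:ℝ), exp (κ * x) * π x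
  have hπ : IntegrableOn π (Ioi (-a)) :=
    (integrableOn_Ioi_of_integrableOn_exp_mul (by linarith) hmeas.aestronglyMeasurable
      hexp).mono_set (Ioi_subset_Ioi (by linarith))
  have hg_meas : Measurable fun x => g (exp (-x - a)) := hg.comp (by fun_prop)
  have hg_sq_π : IntegrableOn (fun x => g (exp (-x - a)) ^ 2 * π x) (Ioi (-a)) := by
    refine hπ.bdd_mul (c := M ^ 2) (hg_meas.pow_const 2).aestronglyMeasurable
      (.of_forall fun x => ?_)
    rw [norm_pow, Real.norm_eq_abs]
    exact pow_le_pow_left₀ (abs_nonneg _) (hgbdd _) 2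
  have hS := integral_Ioi_sq_comp_exp_neg_sub_mul_le hpos hgbdd hb0 hsupp hB hβ ha.le
  have hT : ∫ x in Ioi (-a), π x ≤ exp (κ * a) * I := by
    simpa only [mul_neg, neg_neg] using
      setIntegral_Ioi_le_exp_neg_mul_integral_exp_mul (by linarith) (by linarith) hpos hπ hexp
  have hI : 0 ≤ I := setIntegral_nonneg measurableSet_Ioi fun x _ => by
    have := hpos x; positivity
  calc |∫ x in Ioi (-a), g (exp (-x - a)) * π x|
      ≤ √(∫ x in Ioi (-a), g (exp (-x - a)) ^ 2 * π x) * √(∫ x in Ioi (-a), π x) :=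
        abs_integral_mul_le_sqrt_integral_sq_mul_sqrt_integral hpos hπ
          hg_meas.aestronglyMeasurable hg_sq_π
    _ ≤ √(M ^ 2 * B * exp a * b) * √(exp (κ * a) * I) := by gcongr
    _ = M * √B * √b * exp (a * (1 + κ) / 2) * √I := by
        conv_rhs => rw [← Real.sqrt_sq hM]
        rw [← Real.sqrt_mul (by positivity), Real.exp_half, ← Real.sqrt_mul' _ hB,
          ← Real.sqrt_mul' _ hb0, ← Real.sqrt_mul' _ (Real.exp_pos _).le,
          ← Real.sqrt_mul' _ hI,
          show a * (1 + κ) = a + κ * a by ring, Real.exp_add]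
        ring_nf

/-- Bound on `H_g(-a)` for `a < 0`: with `π` a probability density on `(0,∞)` having an
exponential moment of order `κ > 1`, `g` bounded by `M` with support in `[0,1]` contained
in an interval of length `b ≤ 1`, and `β(y) = y⁻¹ π(-log y) ≤ B` on `(0,1)`, one has
`|H_g(-a)| ≤ M √B √b e^{a(1+κ)/2} (∫₀^∞ e^{κx} π(x) dx)^{1/2}`. -/
theorem stmt_16 (π : ℝ → ℝ) (hmeas : Measurable π) (hpos : ∀ x, 0 ≤ π x)
    (hdens : ∫ x in Ioi (0:ℝ), π x = 1)
    (κ : ℝ) (hκ : 1 < κ)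
    (hexp : IntegrableOn (fun x => Real.exp (κ * x) * π x) (Ioi 0))
    (g : ℝ → ℝ) (hg : Measurable g)
    (M : ℝ) (hM : 0 ≤ M) (hgbdd : ∀ y, |g y| ≤ M)
    (b c₀ : ℝ) (hb0 : 0 ≤ b) (hb1 : b ≤ 1)
    (hsupp : ∀ y, y ∉ Icc c₀ (c₀ + b) → g y = 0)
    (hsupp01 : ∀ y, y ∉ Icc (0:ℝ) 1 → g y = 0)
    (B : ℝ) (hB : 0 ≤ B)
    (hβ : ∀ y ∈ Ioo (0:ℝ) 1, y⁻¹ * π (-Real.log y) ≤ B) :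
    ∀ a : ℝ, a < 0 →
      |∫ x in Ioi (-a), g (Real.exp (-x - a)) * π x| ≤
        M * Real.sqrt B * Real.sqrt b * Real.exp (a * (1 + κ) / 2) *
          Real.sqrt (∫ x in Ioi (0:ℝ), Real.exp (κ * x) * π x) :=
  stmt_16_general π hmeas hpos κ hκ hexp g hg M hM hgbdd b c₀ hb0 hsupp B hB hβ
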